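/- For every integer t ≥ 1, the number of 3×3 matrices of positive integers (entries not required to be distinct) in which the three row sums, the three column sums, the main-diagonal sum x₁₁+x₂₂+x₃₃, and the antidiagonal sum x₁₃+x₂₂+x₃₁ are all equal to t, is (2t²−6t+9)/9 if t is divisible by 3, and 0 otherwise. -/

import Mathlib

/-- `WeakMa t` = number of weak 3×3 magic squares (entries not required to be
distinct) with positive entries and magic sum t. -/
noncomputable def WeakMa (t : ℕ) : ℕ :=
  {x : Matrix (Fin 3) (Fin 3) ℤ |
    (∀ i, ∑ j, x i j = (t : ℤ)) ∧ (∀ j, ∑ i, x i j = (t : ℤ)) ∧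
    x 0 0 + x 1 1 + x 2 2 = (t : ℤ) ∧ x 0 2 + x 1 1 + x 2 0 = (t : ℤ) ∧
    ∀ i j, 0 < x i j}.ncard

/-!
The middle column and the two diagonals cover the centre three times and the top and bottom rows
once each, so `3 x₁₁ = 3t - 2t`: the centre is `c = t / 3`. Writing `a`, `b`
for the offsets of the two top corners from `c`, the remaining linear conditions force the
square to be `centeredSquare c a b`, whose entries are `c`, `c ± a`, `c ± b`, `c ± (a + b)` and
`c ± (a - b)`; they are all positive iff `|a| + |b| < c`. So the squares are in bijection with
the lattice points of the open `ℓ¹`-ball of radius `c`, and there are `2c² - 2c + 1` of these.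
-/

open Finset

def IsWeakMagic {R : Type*} [AddCommMonoid R] (x : Matrix (Fin 3) (Fin 3) R) (s : R) : Prop :=
  (∀ i, ∑ j, x i j = s) ∧ (∀ j, ∑ i, x i j = s) ∧
    x 0 0 + x 1 1 + x 2 2 = s ∧ x 0 2 + x 1 1 + x 2 0 = s

theorem weakMa_eq_ncard (t : ℕ) :
    WeakMa t = {x | IsWeakMagic x (t : ℤ) ∧ ∀ i j, 0 < x i j}.ncard := by
  simp only [WeakMa, IsWeakMagic, and_assoc]

def centeredSquare {R : Type*} [AddCommGroup R] (c a b : R) : Matrix (Fin 3) (Fin 3) R :=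
  !![c + a, c - a - b, c + b; c - a + b, c, c + a - b; c - b, c + a + b, c - a]

theorem centeredSquare_injective {R : Type*} [AddCommGroup R] (c : R) :
    Function.Injective fun p : R × R => centeredSquare c p.1 p.2 := by
  intro p q h
  have h00 := congrFun (congrFun h 0) 0
  have h02 := congrFun (congrFun h 0) 2
  simp only [centeredSquare, Matrix.of_apply, Matrix.cons_val', Matrix.cons_val,
    Matrix.cons_val_fin_one, add_right_inj] at h00 h02
  exact Prod.ext h00 h02

section CommRing

variable {R : Type*} [CommRing R] {x : Matrix (Fin 3) (Fin 3) R} {s : R}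

theorem IsWeakMagic.three_mul_center (h : IsWeakMagic x s) : 3 * x 1 1 = s := by
  obtain ⟨hrow, hcol, hdiag, hanti⟩ := h
  have r0 := hrow 0
  have r2 := hrow 2
  have k1 := hcol 1
  simp only [Fin.sum_univ_three] at r0 r2 k1
  linear_combination k1 + hdiag + hanti - r0 - r2

theorem IsWeakMagic.eq_centeredSquare (h : IsWeakMagic x s) :
    x = centeredSquare (x 1 1) (x 0 0 - x 1 1) (x 0 2 - x 1 1) := by
  have hc := h.three_mul_center
  obtain ⟨hrow, hcol, hdiag, hanti⟩ := h
  have r0 := hrow 0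
  have r1 := hrow 1
  have k0 := hcol 0
  have k1 := hcol 1
  simp only [Fin.sum_univ_three] at r0 r1 k0 k1
  ext i j
  fin_cases i <;> fin_cases j <;>
    simp only [Fin.zero_eta, Fin.mk_one, Fin.reduceFinMk, centeredSquare, Matrix.of_apply,
      Matrix.cons_val', Matrix.cons_val, Matrix.cons_val_fin_one, add_sub_cancel,
      sub_add_sub_cancel']
  · linear_combination r0 - hc
  · linear_combination k0 - hanti
  · linear_combination r1 - k0 + hanti - hc
  · linear_combination hanti - hc
  · linear_combination k1 - r0
  · linear_combination hdiag - hc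

theorem isWeakMagic_centeredSquare (c a b : R) : IsWeakMagic (centeredSquare c a b) (3 * c) := by
  refine ⟨fun i => ?_, fun j => ?_, ?_, ?_⟩
  · fin_cases i <;>
      simp only [Fin.sum_univ_three, Fin.zero_eta, Fin.mk_one, Fin.reduceFinMk, centeredSquare,
        Matrix.of_apply, Matrix.cons_val', Matrix.cons_val, Matrix.cons_val_fin_one] <;> ring
  · fin_cases j <;>
      simp only [Fin.sum_univ_three, Fin.zero_eta, Fin.mk_one, Fin.reduceFinMk, centeredSquare,
        Matrix.of_apply, Matrix.cons_val', Matrix.cons_val, Matrix.cons_val_fin_one] <;> ring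
  · simp only [centeredSquare, Matrix.of_apply, Matrix.cons_val', Matrix.cons_val,
      Matrix.cons_val_fin_one]
    ring
  · simp only [centeredSquare, Matrix.of_apply, Matrix.cons_val', Matrix.cons_val,
      Matrix.cons_val_fin_one]
    ring

end CommRing

section LinearOrderedRing

variable {R : Type*} [CommRing R] [LinearOrder R] [IsStrictOrderedRing R]

theorem centeredSquare_pos_iff {c a b : R} :
    (∀ i j, 0 < centeredSquare c a b i j) ↔ |a| + |b| < c := by
  constructor
  · intro h
    have h01 := h 0 1
    have h21 := h 2 1
    have h10 := h 1 0
    have h12 := h 1 2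
    simp only [centeredSquare, Matrix.of_apply, Matrix.cons_val', Matrix.cons_val,
      Matrix.cons_val_fin_one] at h01 h21 h10 h12
    cases abs_cases a <;> cases abs_cases b <;> linarith
  · intro h i j
    have := neg_abs_le a
    have := le_abs_self a
    have := neg_abs_le b
    have := le_abs_self b
    fin_cases i <;> fin_cases j <;>
      simp only [Fin.zero_eta, Fin.mk_one, Fin.reduceFinMk, centeredSquare, Matrix.of_apply,
        Matrix.cons_val', Matrix.cons_val, Matrix.cons_val_fin_one] <;> linarith

theorem setOf_isWeakMagic_pos_eq_image (c : R) :
    {x | IsWeakMagic x (3 * c) ∧ ∀ i j, 0 < x i j} =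
      (fun p : R × R => centeredSquare c p.1 p.2) '' {p | |p.1| + |p.2| < c} := by
  ext x
  constructor
  · rintro ⟨hx, hpos⟩
    have hc : x 1 1 = c := mul_left_cancel₀ three_ne_zero hx.three_mul_center
    have hxc := hx.eq_centeredSquare
    rw [hc] at hxc
    exact ⟨(x 0 0 - c, x 0 2 - c), centeredSquare_pos_iff.1 (hxc ▸ hpos), hxc.symm⟩
  · rintro ⟨⟨a, b⟩, hab, rfl⟩
    exact ⟨isWeakMagic_centeredSquare c a b, centeredSquare_pos_iff.2 hab⟩

end LinearOrderedRing

theorem sum_Icc_two_mul_sub_abs_add_one (n : ℕ) :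
    ∑ a ∈ Icc (-(n : ℤ)) n, (2 * (n - |a|) + 1) = 2 * n ^ 2 + 2 * n + 1 := by
  induction n with
  | zero => simp
  | succ n ih =>
    have hIcc : Icc (-((n + 1 : ℕ) : ℤ)) (n + 1 : ℕ) =
        insert (-(n + 1 : ℤ)) (insert (n + 1 : ℤ) (Icc (-(n : ℤ)) n)) := by
      ext
      simp only [mem_Icc, mem_insert]
      omega
    have hshift : ∀ a : ℤ, 2 * ((n + 1 : ℕ) - |a|) + 1 = (2 * (n - |a|) + 1) + 2 := by
      intro a
      push_cast
      ring
    rw [hIcc, sum_insert (by simp; omega), sum_insert (by simp), sum_congr rfl fun a _ => hshift a,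
      sum_add_distrib, ih, sum_const, Int.card_Icc, nsmul_eq_mul, Int.toNat_of_nonneg (by omega),
      abs_neg, abs_of_nonneg (by positivity)]
    push_cast
    ring

theorem ncard_setOf_abs_add_abs_le (n : ℕ) :
    {p : ℤ × ℤ | |p.1| + |p.2| ≤ n}.ncard = 2 * n ^ 2 + 2 * n + 1 := by
  have hset : {p : ℤ × ℤ | |p.1| + |p.2| ≤ n} =
      ((Icc (-(n : ℤ)) n).sigma fun a => Icc (-(n - |a|)) (n - |a|)).map
        (Equiv.sigmaEquivProd ℤ ℤ).toEmbedding := by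
    ext ⟨a, b⟩
    simp only [Set.mem_ofPred_eq, mem_coe, mem_map_equiv, Equiv.sigmaEquivProd_symm_apply,
      mem_sigma, mem_Icc, ← abs_le]
    rw [le_sub_iff_add_le']
    exact ⟨fun h => ⟨by linarith [abs_nonneg b], h⟩, And.right⟩
  have hfiber : ∀ a ∈ Icc (-(n : ℤ)) n,
      ((Icc (-(n - |a|)) (n - |a|)).card : ℤ) = 2 * (n - |a|) + 1 := by
    intro a ha
    rw [mem_Icc, ← abs_le] at ha
    rw [Int.card_Icc, Int.toNat_of_nonneg (by omega)]
    ring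
  rw [hset, Set.ncard_coe_finset, card_map, card_sigma, ← Nat.cast_inj (R := ℤ), Nat.cast_sum,
    sum_congr rfl hfiber, sum_Icc_two_mul_sub_abs_add_one]
  push_cast
  ring

theorem weak_magic_affine_count (t : ℕ) (ht : 1 ≤ t) :
    (3 ∣ t → 9 * (WeakMa t : ℤ) = 2*(t : ℤ)^2 - 6*(t : ℤ) + 9) ∧
    (¬ (3 ∣ t) → WeakMa t = 0) := by
  rw [weakMa_eq_ncard]
  refine ⟨?_, fun h3 => ?_⟩
  · rintro ⟨c, rfl⟩
    obtain ⟨n, rfl⟩ : ∃ n, c = n + 1 := ⟨c - 1, by omega⟩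
    have hball : {p : ℤ × ℤ | |p.1| + |p.2| < ((n + 1 : ℕ) : ℤ)} =
        {p : ℤ × ℤ | |p.1| + |p.2| ≤ (n : ℤ)} := by
      ext
      push_cast
      simp
    rw [Nat.cast_mul, Nat.cast_ofNat, setOf_isWeakMagic_pos_eq_image,
      Set.ncard_image_of_injective _ (centeredSquare_injective _), hball,
      ncard_setOf_abs_add_abs_le]
    push_cast
    ring
  · have hempty : {x | IsWeakMagic x (t : ℤ) ∧ ∀ i j, 0 < x i j} = ∅ :=
      Set.eq_empty_of_forall_notMem fun x hx =>
        h3 (by exact_mod_cast (Dvd.intro _ hx.1.three_mul_center : (3 : ℤ) ∣ t))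
    rw [hempty, Set.ncard_empty]
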